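/- Linear advice lower bound for repeated matrix games (Theorem 3). Let q ≥ 1, n ≥ 1, and b be natural numbers, A : Fin q → Fin q → ℝ≥0 a cost matrix with maximum entry ‖A‖∞ = max_{x,y} A(x,y), V a real, and μ* : Fin q → ℝ a probability vector (μ* ≥ 0, Σ_x μ*(x) = 1) such that Σ_x μ*(x)·A(x,y) ≥ V for every y ∈ Fin q (such μ* exists when V is the value of the one-shot zero-sum game defined by A). Let 0 < ε ≤ V. Let μ be a randomized algorithm reading b bits of advice for the n-round guessing game over Fin q (a PMF over pairs (φ, g) as below), whose cost on input x : Fin n → Fin q for a pair (φ,g) is Σ_{i} A(x_i, y_i) with y_i the answer of (φ,g) in round i. If E_{(φ,g)∼μ}[cost on x] ≤ (V − ε)·n for every input x, then b ≥ ε²·n / (2·ln 2·‖A‖∞²). -/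

import Mathlib

open Classical
open scoped NNReal

/-- A deterministic algorithm reading `b` bits of advice for an `n`-round guessing game
with known history over the alphabet `Fin q`: an advice function
`φ : (Fin n → Fin q) → Fin (2^b)` together with an answer function `g` assigning to each
advice value, each round `i`, and each history an answer in `Fin q`. -/
abbrev AdviceAlg (n q b : ℕ) : Type :=
  ((Fin n → Fin q) → Fin (2 ^ b)) ×
    (Fin (2 ^ b) → (i : Fin n) → ({j : Fin n // j < i} → Fin q) → Fin q)

/-!
Feed the algorithm an input `x` drawn from the product distribution `μ*^⊗n`. For a fixed
advice value, the gain `∑ᵢ (V - A(xᵢ, yᵢ))` has increments bounded by `‖A‖∞` whose conditional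
mean is `≤ 0`, because `μ*` guarantees `V` against every answer; so its exponential moment at
`t ≥ 0` is at most `exp (n t² ‖A‖∞² / 2)` (Hoeffding–Azuma). Choosing the advice as a function
of `x` multiplies this by at most the number `2^b` of advice values, while by Jensen the
performance hypothesis makes it at least `exp (t ε n)`. Take logarithms and `t = ε / ‖A‖∞²`.
-/

open Real Finset

theorem sum_mul_exp_mul_le_exp_sq {α : Type*} [Fintype α] {p X : α → ℝ} {M t : ℝ}
    (hp₀ : ∀ c, 0 ≤ p c) (hp₁ : ∑ c, p c = 1) (hM : 0 < M) (hX : ∀ c, |X c| ≤ M)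
    (hmean : ∑ c, p c * X c ≤ 0) (ht : 0 ≤ t) :
    ∑ c, p c * exp (t * X c) ≤ exp (t ^ 2 * M ^ 2 / 2) := by
  have hsinh : 0 ≤ sinh (t * M) / M := div_nonneg (sinh_nonneg_iff.2 (by positivity)) hM.le
  calc ∑ c, p c * exp (t * X c)
      = ∑ c, p c * exp (X c / M * (t * M)) := by
        congr! 3; field_simp
    _ ≤ ∑ c, p c * (cosh (t * M) + X c / M * sinh (t * M)) := by
        gcongr with c
        · exact hp₀ c
        refine exp_mul_le_cosh_add_mul_sinh ?_ _
        rw [abs_div, abs_of_pos hM, div_le_one hM]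
        exact hX c
    _ = cosh (t * M) + (∑ c, p c * X c) * (sinh (t * M) / M) := by
        simp only [mul_add, sum_add_distrib, ← sum_mul, hp₁, one_mul]
        rw [sum_mul]
        congr 1
        exact sum_congr rfl fun c _ => by ring
    _ ≤ cosh (t * M) := add_le_of_nonpos_right (mul_nonpos_of_nonpos_of_nonneg hmean hsinh)
    _ ≤ exp (t ^ 2 * M ^ 2 / 2) := by
        rw [← mul_pow]; exact cosh_le_exp_half_sq _

section Causal

variable {α β : Type*}

def IsCausal {n : ℕ} (s : Fin n → (Fin n → α) → β) : Prop :=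
  ∀ i x x', (∀ j < i, x j = x' j) → s i x = s i x'

theorem isCausal_of_history {n : ℕ} (g : (i : Fin n) → ({j : Fin n // j < i} → α) → β) :
    IsCausal fun i (x : Fin n → α) => g i fun j => x j :=
  fun i _ _ h => congrArg (g i) (funext fun j => h j j.2)

theorem sum_prod_mul_exp_sum_le [Fintype α] {p : α → ℝ} (hp : ∀ c, 0 ≤ p c)
    (D : α → β → ℝ) {κ : ℝ} (hD : ∀ y, ∑ c, p c * exp (D c y) ≤ exp κ)
    {n : ℕ} (s : Fin n → (Fin n → α) → β) (hs : IsCausal s) :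
    ∑ x : Fin n → α, (∏ i, p (x i)) * exp (∑ i, D (x i) (s i x)) ≤ exp (n * κ) := by
  induction n with
  | zero => simp
  | succ n ih =>
    rcases isEmpty_or_nonempty α with hα | ⟨⟨c₀⟩⟩
    · rw [univ_eq_empty, sum_empty]; exact (exp_pos _).le
    obtain ⟨y₀, hfirst⟩ : ∃ y₀, ∀ c x', s 0 (Fin.cons c x') = y₀ :=
      ⟨_, fun c x' => hs 0 _ (fun _ => c₀) fun j hj => absurd hj (Fin.not_lt_zero j)⟩
    have htail : ∀ c : α, IsCausal fun i x' => s i.succ (Fin.cons c x') :=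
      fun c i x x' h => hs _ _ _ <| Fin.cases (fun _ => rfl)
        fun j hj => h j (Fin.succ_lt_succ_iff.1 hj)
    rw [← (Fin.consEquiv fun _ : Fin (n + 1) => α).sum_comp, Fintype.sum_prod_type]
    calc _ = ∑ c, p c * exp (D c y₀) * ∑ x' : Fin n → α, (∏ i, p (x' i)) *
            exp (∑ i, D (x' i) (s i.succ (Fin.cons c x'))) := by
          refine sum_congr rfl fun c _ => ?_
          rw [mul_sum]
          refine sum_congr rfl fun x' _ => ?_
          simp only [Fin.consEquiv, Equiv.coe_fn_mk, Fin.prod_univ_succ, Fin.sum_univ_succ,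
            Fin.cons_zero, Fin.cons_succ, hfirst, exp_add]
          ring
      _ ≤ ∑ c, p c * exp (D c y₀) * exp (n * κ) := by
          gcongr with c
          · exact mul_nonneg (hp c) (exp_pos _).le
          · exact ih _ (htail c)
      _ ≤ exp (↑(n + 1) * κ) := by
          rw [← sum_mul, Nat.cast_succ, add_one_mul, exp_add, mul_comm (exp _)]
          gcongr
          exact hD y₀

theorem sum_prod_mul_exp_mul_sum_sub_le [Fintype α] {A : α → β → ℝ≥0} {p : α → ℝ}
    {M V t : ℝ} (hA : ∀ x y, (A x y : ℝ) ≤ M) (hp₀ : ∀ x, 0 ≤ p x) (hp₁ : ∑ x, p x = 1)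
    (hpV : ∀ y, V ≤ ∑ x, p x * A x y) (hV₀ : 0 ≤ V) (hVM : V ≤ M) (hM : 0 < M) (ht : 0 ≤ t)
    {n : ℕ} (g : (i : Fin n) → ({j : Fin n // j < i} → α) → β) :
    ∑ x : Fin n → α, (∏ i, p (x i)) * exp (t * ∑ i, (V - A (x i) (g i fun j => x j)))
      ≤ exp (n * (t ^ 2 * M ^ 2 / 2)) := by
  simp only [mul_sum]
  refine sum_prod_mul_exp_sum_le hp₀ (fun x y => t * (V - A x y)) (fun y => ?_) _
    (isCausal_of_history g)
  refine sum_mul_exp_mul_le_exp_sq hp₀ hp₁ hM (fun x => ?_) ?_ ht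
  · rw [abs_le]
    constructor <;> linarith [hA x y, (A x y).coe_nonneg]
  · simp only [mul_sub, sum_sub_distrib, ← sum_mul, hp₁, one_mul]
    linarith [hpV y]

end Causal

theorem sum_comp_le_card_mul {ι X : Type*} [Fintype ι] [Fintype X] {G : ι → X → ℝ}
    (hG : ∀ a x, 0 ≤ G a x) {B : ℝ} (hB : ∀ a, ∑ x, G a x ≤ B) (φ : X → ι) :
    ∑ x, G (φ x) x ≤ Fintype.card ι * B := calc
  ∑ x, G (φ x) x ≤ ∑ x, ∑ a, G a x :=
    sum_le_sum fun x _ => single_le_sum (fun a _ => hG a x) (mem_univ _)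
  _ = ∑ a, ∑ x, G a x := sum_comm
  _ ≤ ∑ _a : ι, B := sum_le_sum fun a _ => hB a
  _ = Fintype.card ι * B := by simp

section WeightedMean

variable {ι : Type*} [Fintype ι] {w f : ι → ℝ} {c : ℝ}

theorem sum_mul_le_of_le (hw₀ : ∀ i, 0 ≤ w i) (hw₁ : ∑ i, w i = 1) (hf : ∀ i, f i ≤ c) :
    ∑ i, w i * f i ≤ c := calc
  ∑ i, w i * f i ≤ ∑ i, w i * c := by gcongr with i; exacts [hw₀ i, hf i]
  _ = c := by rw [← sum_mul, hw₁, one_mul]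

theorem le_sum_mul_of_le (hw₀ : ∀ i, 0 ≤ w i) (hw₁ : ∑ i, w i = 1) (hf : ∀ i, c ≤ f i) :
    c ≤ ∑ i, w i * f i := calc
  c = ∑ i, w i * c := by rw [← sum_mul, hw₁, one_mul]
  _ ≤ ∑ i, w i * f i := by gcongr with i; exacts [hw₀ i, hf i]

theorem exp_le_sum_mul_exp (hw₀ : ∀ i, 0 ≤ w i) (hw₁ : ∑ i, w i = 1)
    (hc : c ≤ ∑ i, w i * f i) : exp c ≤ ∑ i, w i * exp (f i) :=
  (exp_le_exp.2 hc).trans <| by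
    simpa using convexOn_exp.map_sum_le (fun i _ => hw₀ i) hw₁ fun i _ => Set.mem_univ (f i)

theorem exp_mul_le_of_forall_le_sum_mul {X : Type*} [Fintype X] {p : X → ℝ} {Z : ι → X → ℝ}
    {t B : ℝ} (hw₀ : ∀ i, 0 ≤ w i) (hw₁ : ∑ i, w i = 1) (hp₀ : ∀ x, 0 ≤ p x)
    (hp₁ : ∑ x, p x = 1) (ht : 0 ≤ t) (hc : ∀ x, c ≤ ∑ i, w i * Z i x)
    (hB : ∀ i, ∑ x, p x * exp (t * Z i x) ≤ B) : exp (t * c) ≤ B := calc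
  exp (t * c) ≤ ∑ x, p x * ∑ i, w i * exp (t * Z i x) :=
    le_sum_mul_of_le hp₀ hp₁ fun x => exp_le_sum_mul_exp hw₀ hw₁ <| by
      simpa only [mul_left_comm (w _) t, ← mul_sum] using mul_le_mul_of_nonneg_left (hc x) ht
  _ = ∑ i, w i * ∑ x, p x * exp (t * Z i x) := by
    simp_rw [mul_sum, mul_left_comm (p _)]; exact sum_comm
  _ ≤ B := sum_mul_le_of_le hw₀ hw₁ hB

end WeightedMean

theorem sub_le_mul_log_two_of_exp_le {b : ℕ} {s r : ℝ} (h : exp s ≤ 2 ^ b * exp r) :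
    s - r ≤ b * log 2 := by
  have := log_le_log (exp_pos s) h
  rwa [log_mul (by positivity) (exp_pos r).ne', log_pow, log_exp, log_exp,
    ← sub_le_iff_le_add] at this

theorem rmg_advice_lower_bound
    {q n b : ℕ} (hq : 1 ≤ q)
    (A : Fin q → Fin q → ℝ≥0) (Amax V ε : ℝ)
    (hA₁ : ∀ x y, (A x y : ℝ) ≤ Amax)
    (μstar : Fin q → ℝ) (hμ0 : ∀ x, 0 ≤ μstar x) (hμ1 : ∑ x, μstar x = 1)
    (hμV : ∀ y : Fin q, (∑ x, μstar x * (A x y : ℝ)) ≥ V)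
    (hε0 : 0 < ε) (hεV : ε ≤ V)
    (μ : AdviceAlg n q b → ℝ) (hμalg0 : ∀ a, 0 ≤ μ a) (hμalg1 : ∑ a, μ a = 1)
    (hperf : ∀ x : Fin n → Fin q,
      (∑ alg, μ alg * ∑ i, (A (x i) (alg.2 (alg.1 x) i (fun j => x j.1)) : ℝ))
        ≤ (V - ε) * n) :
    (b : ℝ) ≥ ε ^ 2 * n / (2 * Real.log 2 * Amax ^ 2) := by
  have hVM : V ≤ Amax := (hμV ⟨0, hq⟩).trans (sum_mul_le_of_le hμ0 hμ1 fun x => hA₁ x _)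
  have hM : 0 < Amax := hε0.trans_le (hεV.trans hVM)
  set t := ε / Amax ^ 2 with ht_def
  have ht : 0 ≤ t := by positivity
  set w : (Fin n → Fin q) → ℝ := fun x => ∏ i, μstar (x i)
  set Z : ((i : Fin n) → ({j : Fin n // j < i} → Fin q) → Fin q) → (Fin n → Fin q) → ℝ :=
    fun g x => ∑ i, (V - A (x i) (g i fun j => x j))
  have hw₀ : ∀ x, 0 ≤ w x := fun x => prod_nonneg fun i _ => hμ0 (x i)
  have hw₁ : ∑ x, w x = 1 := by rw [← Fintype.sum_pow, hμ1, one_pow]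
  have hgain : ∀ x, ε * n ≤ ∑ alg : AdviceAlg n q b, μ alg * Z (alg.2 (alg.1 x)) x := fun x => by
    simp only [Z, sum_sub_distrib, sum_const, card_univ, Fintype.card_fin, nsmul_eq_mul, mul_sub,
      ← sum_mul, hμalg1, one_mul]
    linarith [hperf x]
  have hupper : ∀ alg : AdviceAlg n q b, ∑ x, w x * exp (t * Z (alg.2 (alg.1 x)) x)
      ≤ 2 ^ b * exp (n * (t ^ 2 * Amax ^ 2 / 2)) := fun alg =>
    (sum_comp_le_card_mul (G := fun a x => w x * exp (t * Z (alg.2 a) x))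
      (fun a x => mul_nonneg (hw₀ x) (exp_pos _).le)
      (fun a => sum_prod_mul_exp_mul_sum_sub_le hA₁ hμ0 hμ1 hμV (hε0.le.trans hεV) hVM hM ht
        (alg.2 a)) alg.1).trans_eq (by simp)
  have hexp := exp_mul_le_of_forall_le_sum_mul hμalg0 hμalg1 hw₀ hw₁ ht hgain hupper
  have hbits := sub_le_mul_log_two_of_exp_le hexp
  rw [ht_def] at hbits
  field_simp at hbits
  rw [ge_iff_le, div_le_iff₀ (by positivity)]
  linarith
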